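/- arXiv:math/0307384 — 2 statements merged into one kernel-verified Lean document; each statement's English description precedes it below -/
import Mathlib

section
/- Let T be an invertible measure-preserving transformation of a probability space (X, 𝔅, μ), let J be a positive integer, and let B ∈ 𝔅 be such that the sets T^i B for i = −J, …, J are pairwise disjoint. Let a_{−J}, …, a_J be nonnegative reals and set f = ∑_{i=−J}^{J} a_i · 1_{T^i B}. Then for every positive integer n and every x ∈ X, N_n(f)(x)/n ≥ ∑_{i=−J}^{J} 1_{T^i B}(x) · (1/n)·#{k ∈ ℕ : 1 ≤ k ≤ J − |i| and a_{k+i}/k > 1/n}. -/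
open MeasureTheory Set
open scoped ENNReal ENat

/-- The counting function `N_n(f)(x) = #{k ≥ 1 : f(T^k x)/k > 1/n}`, valued in `ℝ≥0∞`. -/
noncomputable def countN {X : Type*} (T : X → X) (f : X → ℝ) (n : ℕ) (x : X) : ℝ≥0∞ :=
  ({k : ℕ | 1 ≤ k ∧ f (T^[k] x) / k > 1 / n}.encard : ℕ∞)

/-- The `i`-th power (for `i : ℤ`) of an invertible transformation. -/
noncomputable def ziter {X : Type*} [MeasurableSpace X] (T : X ≃ᵐ X) (i : ℤ) : X → X :=
  if 0 ≤ i then (⇑T)^[i.toNat] else (⇑T.symm)^[(-i).toNat]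

/-!
At a point `x = T^i b` of the tower, `b ∈ B`, the level sets `T^j B` are disjoint, so `f` takes
the value `a_j` at `T^k x = T^{i+k} b` whenever `|i + k| ≤ J`, in particular for
`1 ≤ k ≤ J - |i|`. Hence the `k` counted on the left are among those counted by `N_n(f)(x)`,
and by disjointness again at most one term of the left-hand sum is nonzero.
-/

section Indicator

variable {ι α : Type*} {I : Finset ι} {s : ι → Set α}

theorem Finset.sum_indicator_apply_eq_of_pairwiseDisjoint {M : Type*} [AddCommMonoid M]
    (hs : (I : Set ι).PairwiseDisjoint s) (g : ι → α → M) {j : ι} (hj : j ∈ I) {x : α}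
    (hx : x ∈ s j) : ∑ i ∈ I, (s i).indicator (g i) x = g j x := by
  rw [Finset.sum_eq_single_of_mem j hj fun i hi hij =>
    Set.indicator_of_notMem (Set.disjoint_left.mp (hs hj hi hij.symm) hx) _]
  exact Set.indicator_of_mem hx _

theorem Finset.sum_indicator_one_mul_le_of_pairwiseDisjoint {M : Type*} [NonAssocSemiring M]
    [PartialOrder M] [CanonicallyOrderedAdd M]
    (hs : (I : Set ι).PairwiseDisjoint s) {c : ι → M} {R : M} {x : α}
    (hc : ∀ i ∈ I, x ∈ s i → c i ≤ R) :
    ∑ i ∈ I, (s i).indicator (fun _ => 1) x * c i ≤ R := by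
  simp_rw [← Set.indicator_mul_const, one_mul]
  by_cases hx : ∃ j ∈ I, x ∈ s j
  · obtain ⟨j, hj, hxj⟩ := hx
    rw [Finset.sum_indicator_apply_eq_of_pairwiseDisjoint hs _ hj hxj]
    exact hc j hj hxj
  · push Not at hx
    rw [Finset.sum_eq_zero fun i hi => Set.indicator_of_notMem (hx i hi) _]
    exact zero_le

end Indicator

section ZIter

variable {X : Type*} [MeasurableSpace X] (T : X ≃ᵐ X)

theorem ziter_succ (i : ℤ) (b : X) : ziter T (i + 1) b = T (ziter T i b) := by
  unfold ziter
  rcases le_or_gt 0 i with h | h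
  · rw [if_pos (by omega), if_pos h, show (i + 1).toNat = i.toNat + 1 by omega,
      Function.iterate_succ_apply']
  · rw [if_neg (show ¬ 0 ≤ i by omega), show (-i).toNat = (-(i + 1)).toNat + 1 by omega,
      Function.iterate_succ_apply', T.apply_symm_apply]
    split_ifs
    · rw [show (i + 1).toNat = 0 by omega, show (-(i + 1)).toNat = 0 by omega]
      rfl
    · rfl

theorem iterate_ziter (i : ℤ) (k : ℕ) (b : X) :
    (⇑T)^[k] (ziter T i b) = ziter T (i + k) b := by
  induction k with
  | zero => simp
  | succ k ih =>
    rw [Function.iterate_succ_apply', ih, Nat.cast_succ, ← add_assoc, ziter_succ]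

end ZIter

theorem rohlin_tower_counting_estimate_general
    {X : Type*} [MeasurableSpace X]
    (T : X ≃ᵐ X)
    (J : ℕ) (B : Set X)
    (hdisj : ∀ i ∈ Finset.Icc (-(J : ℤ)) J, ∀ i' ∈ Finset.Icc (-(J : ℤ)) J,
      i ≠ i' → Disjoint (ziter T i '' B) (ziter T i' '' B))
    (a : ℤ → ℝ)
    (f : X → ℝ)
    (hf : f = fun x => ∑ i ∈ Finset.Icc (-(J : ℤ)) J,
      Set.indicator (ziter T i '' B) (fun _ => a i) x) :
    ∀ n : ℕ, 1 ≤ n → ∀ x : X,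
      ∑ i ∈ Finset.Icc (-(J : ℤ)) J,
          Set.indicator (ziter T i '' B) (fun _ => (1 : ℝ≥0∞)) x *
            ((({k : ℕ | 1 ≤ k ∧ (k : ℤ) ≤ (J : ℤ) - |i| ∧
                a (k + i) / k > 1 / n}.encard : ℕ∞) : ℝ≥0∞) / n) ≤
        countN T f n x / n := by
  intro n _ x
  have hpw : ((Finset.Icc (-(J : ℤ)) J : Finset ℤ) : Set ℤ).PairwiseDisjoint
      (fun i => ziter T i '' B) := fun i hi i' hi' => hdisj i hi i' hi'
  have hf_level : ∀ j ∈ Finset.Icc (-(J : ℤ)) J, ∀ b ∈ B, f (ziter T j b) = a j := by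
    intro j hj b hb
    rw [hf]
    exact Finset.sum_indicator_apply_eq_of_pairwiseDisjoint hpw (fun i _ => a i) hj ⟨b, hb, rfl⟩
  refine Finset.sum_indicator_one_mul_le_of_pairwiseDisjoint hpw ?_
  rintro i hi ⟨b, hb, rfl⟩
  gcongr
  refine ENat.toENNReal_le.mpr (encard_mono ?_)
  rintro k ⟨hk, hkJ, hka⟩
  have hik : i + k ∈ Finset.Icc (-(J : ℤ)) J := by
    rw [Finset.mem_Icc] at hi ⊢
    constructor <;> cases abs_cases i <;> omega
  refine ⟨hk, ?_⟩
  rwa [iterate_ziter, hf_level _ hik b hb, add_comm]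

/-- **Rohlin tower estimate.** If the sets `T^i B`, `−J ≤ i ≤ J`, are pairwise disjoint
and `f = ∑_{i=−J}^{J} a_i · 1_{T^i B}` with `a_i ≥ 0`, then for every `n ≥ 1` and every
`x`, `N_n(f)(x)/n ≥ ∑_{i=−J}^{J} 1_{T^i B}(x) · (1/n)·#{1 ≤ k ≤ J−|i| : a_{k+i}/k > 1/n}`. -/
theorem rohlin_tower_counting_estimate
    {X : Type*} [MeasurableSpace X] (μ : Measure X) [IsProbabilityMeasure μ]
    (T : X ≃ᵐ X) (hT : MeasurePreserving T μ μ)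
    (J : ℕ) (hJ : 0 < J) (B : Set X) (hB : MeasurableSet B)
    (hdisj : ∀ i ∈ Finset.Icc (-(J : ℤ)) J, ∀ i' ∈ Finset.Icc (-(J : ℤ)) J,
      i ≠ i' → Disjoint (ziter T i '' B) (ziter T i' '' B))
    (a : ℤ → ℝ) (ha : ∀ i ∈ Finset.Icc (-(J : ℤ)) J, 0 ≤ a i)
    (f : X → ℝ)
    (hf : f = fun x => ∑ i ∈ Finset.Icc (-(J : ℤ)) J,
      Set.indicator (ziter T i '' B) (fun _ => a i) x) :
    ∀ n : ℕ, 1 ≤ n → ∀ x : X,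
      ∑ i ∈ Finset.Icc (-(J : ℤ)) J,
          Set.indicator (ziter T i '' B) (fun _ => (1 : ℝ≥0∞)) x *
            ((({k : ℕ | 1 ≤ k ∧ (k : ℤ) ≤ (J : ℤ) - |i| ∧
                a (k + i) / k > 1 / n}.encard : ℕ∞) : ℝ≥0∞) / n) ≤
        countN T f n x / n :=
  rohlin_tower_counting_estimate_general T J B hdisj a f hf
end

section
/- For every measurable set B ⊆ ℝ and every x ∈ ℝ, the maximal operator A applied to the characteristic function of B coincides with the one-sided Hardy–Littlewood maximal function: A(1_B)(x) = H(1_B)(x), where A(f)(x) = sup_{t>0} t · m{y > 0 : |f(x−y)|/y > t} and H(f)(x) = sup_{t>0} (1/t)·∫₀ᵗ |f(x−y)| dy (the supremum taken in [0,∞]). -/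
open MeasureTheory Set
open scoped ENNReal

/-- The maximal operator `A(f)(x) = sup_{t>0} t · m{y > 0 : |f(x−y)|/y > t}`,
with values in `[0,∞]`. -/
noncomputable def Aop (f : ℝ → ℝ) (x : ℝ) : ℝ≥0∞ :=
  ⨆ t : {t : ℝ // 0 < t},
    ENNReal.ofReal t.1 * volume {y ∈ Ioi (0 : ℝ) | |f (x - y)| / y > t.1}

/-- The one-sided Hardy–Littlewood maximal function
`H(f)(x) = sup_{t>0} (1/t)·∫₀ᵗ |f(x−y)| dy`, with values in `[0,∞]`. -/
noncomputable def Hop (f : ℝ → ℝ) (x : ℝ) : ℝ≥0∞ :=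
  ⨆ t : {t : ℝ // 0 < t},
    ENNReal.ofReal (1 / t.1) * ∫⁻ y in Ioo (0 : ℝ) t.1, ENNReal.ofReal |f (x - y)|

/-- On characteristic functions of measurable sets, the maximal operator `A` coincides
with the one-sided Hardy–Littlewood maximal function `H`. -/
theorem Aop_indicator_eq_Hop (B : Set ℝ) (hB : MeasurableSet B) (x : ℝ) :
    Aop (Set.indicator B (fun _ => (1 : ℝ))) x =
      Hop (Set.indicator B (fun _ => (1 : ℝ))) x := by
  set f : ℝ → ℝ := Set.indicator B (fun _ => (1 : ℝ)) with hf
  set S : Set ℝ := (fun y => x - y) ⁻¹' B with hSdef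
  have hS : MeasurableSet S := hB.preimage (measurable_const.sub measurable_id)
  have hset : ∀ t : ℝ, 0 < t →
      {y ∈ Ioi (0:ℝ) | |f (x - y)| / y > t} = Ioo 0 (1/t) ∩ S := by
    intro t ht
    ext y
    simp only [mem_setOf_eq, mem_Ioi, mem_inter_iff, mem_Ioo, hSdef, mem_preimage]
    constructor
    · rintro ⟨hy0, hgt⟩
      by_cases hxy : x - y ∈ B
      · refine ⟨⟨hy0, ?_⟩, hxy⟩
        have h1 : |f (x - y)| = 1 := by simp [hf, hxy]
        rw [h1, gt_iff_lt, lt_div_iff₀ hy0] at hgt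
        rw [lt_div_iff₀ ht]
        linarith
      · exfalso
        have h0 : f (x - y) = 0 := by simp [hf, hxy]
        rw [h0] at hgt
        simp only [abs_zero, zero_div, gt_iff_lt] at hgt
        linarith
    · rintro ⟨⟨hy0, hyt⟩, hxy⟩
      refine ⟨hy0, ?_⟩
      have h1 : |f (x - y)| = 1 := by simp [hf, hxy]
      rw [h1, gt_iff_lt, lt_div_iff₀ hy0]
      rw [lt_div_iff₀ ht] at hyt
      linarith
  have hint : ∀ s : ℝ, 0 < s →
      (∫⁻ y in Ioo (0:ℝ) s, ENNReal.ofReal |f (x - y)|) = volume (Ioo (0:ℝ) s ∩ S) := by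
    intro s _
    have heq : ∀ y : ℝ, ENNReal.ofReal |f (x - y)| = S.indicator (1 : ℝ → ℝ≥0∞) y := by
      intro y
      by_cases hxy : x - y ∈ B
      · simp [hf, hxy, indicator_of_mem, hSdef, mem_preimage]
      · simp [hf, hxy, indicator, hSdef, mem_preimage]
    simp_rw [heq]
    rw [lintegral_indicator_one hS, Measure.restrict_apply hS, inter_comm]
  rw [Aop, Hop]
  apply le_antisymm
  · refine iSup_le fun t => ?_
    have h2 : (0:ℝ) < 1 / t.1 := one_div_pos.mpr t.2
    refine le_trans (le_of_eq ?_)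
      (le_iSup (fun s : {t : ℝ // 0 < t} =>
        ENNReal.ofReal (1 / s.1) * ∫⁻ y in Ioo (0:ℝ) s.1, ENNReal.ofReal |f (x - y)|)
        (⟨1/t.1, h2⟩ : {t : ℝ // 0 < t}))
    rw [hset t.1 t.2, hint (1/t.1) h2, one_div_one_div]
  · refine iSup_le fun s => ?_
    have h2 : (0:ℝ) < 1 / s.1 := one_div_pos.mpr s.2
    refine le_trans (le_of_eq ?_)
      (le_iSup (fun t : {t : ℝ // 0 < t} =>
        ENNReal.ofReal t.1 * volume {y ∈ Ioi (0:ℝ) | |f (x - y)| / y > t.1})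
        (⟨1/s.1, h2⟩ : {t : ℝ // 0 < t}))
    rw [hint s.1 s.2, hset (1/s.1) h2, one_div_one_div]
end
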